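/- arXiv:1805.00703 — 3 statements merged into one kernel-verified Lean document; each statement's English description precedes it below -/
import Mathlib

section
/- Let f ∈ L¹(ℝᵈ), g ∈ L^p(ℝᵈ) with 1 ≤ p ≤ ∞, and let μ : ℝᵈ → GL(d,ℝ) be a measurable function. Then the μ-adaptive convolution f ∗^p_μ g belongs to L^p(ℝᵈ) and satisfies Young's inequality ‖f ∗^p_μ g‖_{L^p} ≤ ‖f‖_{L¹} · ‖g‖_{L^p}. -/
/-!
Hölder's inequality against the weight `|f|` gives, for each `x`,
`|(f ∗ᵖ_μ g)(x)|ᵖ ≤ ‖f‖₁ᵖ⁻¹ ∫ |f(y)| |g_{μ,p}(x,y)|ᵖ dy`. Integrating in `x` and exchanging the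
integrals, it remains to see that `x ↦ g_{μ,p}(x,y)` has the `Lᵖ` norm of `g` for every `y`: the
affine map `x ↦ μ(y)(x - y)` scales Lebesgue measure by `|det μ(y)|⁻¹`, which the factor
`|det μ(y)|^{1/p}` compensates. The same change of variables makes `(x, y) ↦ μ(y)(x - y)`
quasi-measure-preserving, which gives the case `p = ∞` and allows replacing `f` and `g` by
measurable representatives.
-/

open MeasureTheory Matrix
open scoped ENNReal

theorem ENNReal.rpow_lintegral_mul_le {β : Type*} [MeasurableSpace β]
    {ν : Measure β} {p : ℝ} (hp : 1 ≤ p) {w G : β → ℝ≥0∞} (hw : AEMeasurable w ν)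
    (hG : AEMeasurable G ν) :
    (∫⁻ y, w y * G y ∂ν) ^ p ≤ (∫⁻ y, w y ∂ν) ^ (p - 1) * ∫⁻ y, w y * G y ^ p ∂ν := by
  rcases hp.eq_or_lt with rfl | hp
  · simp
  have hpq := Real.HolderConjugate.conjExponent hp
  set q := p.conjExponent
  have hp0 : 0 < p := zero_lt_one.trans hp
  have hq0 : 0 < q := hpq.symm.pos
  -- Hölder's inequality applied to `w * G = w ^ (1 / q) * (w ^ (1 / p) * G)`
  have hsplit : ∀ y, w y * G y = w y ^ (1 / q) * (w y ^ (1 / p) * G y) := fun y => by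
    rw [← mul_assoc, ← ENNReal.rpow_add_of_nonneg _ _ (by positivity) (by positivity),
      one_div, one_div, add_comm, hpq.inv_add_inv_eq_one, ENNReal.rpow_one]
  have hholder := ENNReal.lintegral_mul_le_Lp_mul_Lq ν hpq.symm
    (hw.pow_const (1 / q)) ((hw.pow_const (1 / p)).mul hG)
  simp only [Pi.mul_apply, ← hsplit] at hholder
  have hwq : ∀ y, (w y ^ (1 / q)) ^ q = w y := fun y => by
    rw [← ENNReal.rpow_mul, one_div_mul_cancel hq0.ne', ENNReal.rpow_one]
  have hwp : ∀ y, (w y ^ (1 / p) * G y) ^ p = w y * G y ^ p := fun y => by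
    rw [ENNReal.mul_rpow_of_nonneg _ _ hp0.le, ← ENNReal.rpow_mul, one_div_mul_cancel hp0.ne',
      ENNReal.rpow_one]
  simp only [hwq, hwp] at hholder
  calc (∫⁻ y, w y * G y ∂ν) ^ p
      ≤ ((∫⁻ y, w y ∂ν) ^ (1 / q) * (∫⁻ y, w y * G y ^ p ∂ν) ^ (1 / p)) ^ p :=
        ENNReal.rpow_le_rpow hholder hp0.le
    _ = (∫⁻ y, w y ∂ν) ^ (p - 1) * ∫⁻ y, w y * G y ^ p ∂ν := by
        rw [ENNReal.mul_rpow_of_nonneg _ _ hp0.le, ← ENNReal.rpow_mul, ← ENNReal.rpow_mul,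
          one_div_mul_cancel hp0.ne', ENNReal.rpow_one]
        congr 2
        rw [one_div, eq_sub_of_add_eq' hpq.inv_add_inv_eq_one, sub_mul, one_mul,
          inv_mul_cancel₀ hp0.ne']

section

variable {α β E : Type*} [MeasurableSpace α] [MeasurableSpace β] {μ : Measure α} {ν : Measure β}
  [NormedAddCommGroup E] [NormedSpace ℝ E]

theorem lintegral_rpow_lintegral_mul_le [SFinite μ] [SFinite ν] {p : ℝ} (hp : 1 ≤ p)
    {w : β → ℝ≥0∞} {H : α → β → ℝ≥0∞} (hw : Measurable w)
    (hH : Measurable (Function.uncurry H)) :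
    ∫⁻ x, (∫⁻ y, w y * H x y ∂ν) ^ p ∂μ
      ≤ (∫⁻ y, w y ∂ν) ^ (p - 1) * ∫⁻ y, w y * ∫⁻ x, H x y ^ p ∂μ ∂ν := by
  have hHp : Measurable (Function.uncurry fun x y => H x y ^ p) := hH.pow_const p
  calc ∫⁻ x, (∫⁻ y, w y * H x y ∂ν) ^ p ∂μ
      ≤ ∫⁻ x, (∫⁻ y, w y ∂ν) ^ (p - 1) * ∫⁻ y, w y * H x y ^ p ∂ν ∂μ :=
        lintegral_mono fun x => ENNReal.rpow_lintegral_mul_le hp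
          hw.aemeasurable (hH.comp measurable_prodMk_left).aemeasurable
    _ = (∫⁻ y, w y ∂ν) ^ (p - 1) * ∫⁻ x, ∫⁻ y, w y * H x y ^ p ∂ν ∂μ :=
        lintegral_const_mul _ ((hw.comp measurable_snd).mul hHp).lintegral_prod_right'
    _ = (∫⁻ y, w y ∂ν) ^ (p - 1) * ∫⁻ y, w y * ∫⁻ x, H x y ^ p ∂μ ∂ν := by
        rw [lintegral_lintegral_swap ((hw.comp measurable_snd).mul hHp).aemeasurable]
        congr 1
        exact lintegral_congr fun y =>
          lintegral_const_mul _ (hHp.comp measurable_prodMk_right)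

theorem eLpNorm_integral_smul_le [SFinite μ] [SFinite ν] {p : ℝ≥0∞} (hp : 1 ≤ p)
    (hp_top : p ≠ ∞) {f : β → ℝ} {G : α → β → E} (hf : Measurable f)
    (hG : StronglyMeasurable (Function.uncurry G)) {C : ℝ≥0∞} (hC : ∀ y, eLpNorm (G · y) p μ ≤ C) :
    eLpNorm (fun x => ∫ y, f y • G x y ∂ν) p μ ≤ eLpNorm f 1 ν * C := by
  have hp0 : p ≠ 0 := (zero_lt_one.trans_le hp).ne'
  set r := p.toReal
  have hr : 1 ≤ r := by simpa using ENNReal.toReal_mono hp_top hp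
  have hr0 : 0 < r := zero_lt_one.trans_le hr
  have hCr : ∀ y, ∫⁻ x, ‖G x y‖ₑ ^ r ∂μ ≤ C ^ r := fun y => by
    have := ENNReal.rpow_le_rpow (hC y) hr0.le
    rwa [eLpNorm_eq_lintegral_rpow_enorm_toReal hp0 hp_top, ← ENNReal.rpow_mul,
      one_div_mul_cancel hr0.ne', ENNReal.rpow_one] at this
  set A := ∫⁻ y, ‖f y‖ₑ ∂ν
  calc eLpNorm (fun x => ∫ y, f y • G x y ∂ν) p μ
      = (∫⁻ x, ‖∫ y, f y • G x y ∂ν‖ₑ ^ r ∂μ) ^ (1 / r) :=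
        eLpNorm_eq_lintegral_rpow_enorm_toReal hp0 hp_top
    _ ≤ (∫⁻ x, (∫⁻ y, ‖f y‖ₑ * ‖G x y‖ₑ ∂ν) ^ r ∂μ) ^ (1 / r) := by
        gcongr with x
        refine (enorm_integral_le_lintegral_enorm _).trans_eq ?_
        simp only [enorm_smul]
    _ ≤ (A ^ (r - 1) * ∫⁻ y, ‖f y‖ₑ * ∫⁻ x, ‖G x y‖ₑ ^ r ∂μ ∂ν) ^ (1 / r) := by
        gcongr
        exact lintegral_rpow_lintegral_mul_le hr hf.enorm hG.enorm
    _ ≤ (A ^ (r - 1) * (A * C ^ r)) ^ (1 / r) := by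
        gcongr
        rw [← lintegral_mul_const _ hf.enorm]
        exact lintegral_mono fun y => by gcongr; exact hCr y
    _ = eLpNorm f 1 ν * C := by
        have hAr : A ^ (r - 1) * A = A ^ r := by
          calc A ^ (r - 1) * A = A ^ (r - 1) * A ^ (1 : ℝ) := by rw [ENNReal.rpow_one]
            _ = A ^ r := by
              rw [← ENNReal.rpow_add_of_nonneg _ _ (by linarith) zero_le_one, sub_add_cancel]
        rw [← mul_assoc, hAr, ENNReal.mul_rpow_of_nonneg _ _ (by positivity),
          ← ENNReal.rpow_mul, ← ENNReal.rpow_mul, mul_one_div_cancel hr0.ne', ENNReal.rpow_one,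
          ENNReal.rpow_one, eLpNorm_one_eq_lintegral_enorm]

theorem eLpNorm_top_integral_smul_le [SFinite ν] {f : β → ℝ} {G : α → β → E}
    (hf : AEStronglyMeasurable f ν) {C : ℝ≥0∞} (hC : ∀ᵐ q ∂μ.prod ν, ‖G q.1 q.2‖ₑ ≤ C) :
    eLpNorm (fun x => ∫ y, f y • G x y ∂ν) ∞ μ ≤ eLpNorm f 1 ν * C := by
  rw [eLpNorm_exponent_top, eLpNorm_one_eq_lintegral_enorm,
    ← lintegral_mul_const'' _ hf.enorm]
  refine essSup_le_of_ae_le _ ((Measure.ae_ae_of_ae_prod hC).mono fun x hx => ?_)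
  refine (enorm_integral_le_lintegral_enorm _).trans
    (lintegral_mono_ae (hx.mono fun y hy => ?_))
  rw [enorm_smul]
  gcongr

end

variable {d : ℕ}

/-- The kernel `g_{μ,p}(x, y)`; note that `(1 / ∞).toReal = 0`. -/
noncomputable def adaptiveKernel (p : ℝ≥0∞) (μ : (Fin d → ℝ) → Matrix (Fin d) (Fin d) ℝ)
    (g : (Fin d → ℝ) → ℝ) (x y : Fin d → ℝ) : ℝ :=
  |(μ y).det| ^ (1 / p).toReal * g (μ y *ᵥ (x - y))

noncomputable def adaptiveConv (p : ℝ≥0∞) (μ : (Fin d → ℝ) → Matrix (Fin d) (Fin d) ℝ)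
    (f g : (Fin d → ℝ) → ℝ) (x : Fin d → ℝ) : ℝ :=
  ∫ y, f y * adaptiveKernel p μ g x y

theorem map_volume_mulVec_sub {M : Matrix (Fin d) (Fin d) ℝ} (hM : M.det ≠ 0) (v : Fin d → ℝ) :
    Measure.map (fun x => M *ᵥ (x - v)) volume = ENNReal.ofReal |M.det⁻¹| • volume := by
  have hM' : Measurable (toLin' M) := (toLin' M).continuous_of_finiteDimensional.measurable
  rw [show (fun x => M *ᵥ (x - v)) = toLin' M ∘ (· - v) from rfl,
    ← Measure.map_map hM' (measurable_sub_const v), map_sub_right_eq_self,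
    Real.map_matrix_volume_pi_eq_smul_volume_pi hM]

theorem eLpNorm_det_rpow_mul_comp_mulVec_sub (p : ℝ≥0∞) {g : (Fin d → ℝ) → ℝ}
    (hg : AEStronglyMeasurable g) {M : Matrix (Fin d) (Fin d) ℝ} (hM : M.det ≠ 0)
    (v : Fin d → ℝ) :
    eLpNorm (fun x => |M.det| ^ (1 / p).toReal * g (M *ᵥ (x - v))) p volume
      = eLpNorm g p volume := by
  set t := (1 / p).toReal
  have hT : Measurable fun x => M *ᵥ (x - v) :=
    (continuous_const.matrix_mulVec (continuous_sub_right v)).measurable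
  have hdet : 0 < |M.det| := abs_pos.mpr hM
  have hcancel : ‖|M.det| ^ t‖ₑ * ENNReal.ofReal |M.det⁻¹| ^ t = 1 := by
    rw [Real.enorm_eq_ofReal (by positivity), ENNReal.ofReal_rpow_of_nonneg (abs_nonneg _)
      ENNReal.toReal_nonneg, ← ENNReal.ofReal_mul (by positivity), ← Real.mul_rpow hdet.le
      (abs_nonneg _), ← abs_mul, mul_inv_cancel₀ hM, abs_one, Real.one_rpow, ENNReal.ofReal_one]
  calc eLpNorm (fun x => |M.det| ^ t * g (M *ᵥ (x - v))) p volume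
      = ‖|M.det| ^ t‖ₑ * eLpNorm g p (Measure.map (fun x => M *ᵥ (x - v)) volume) := by
        rw [eLpNorm_map_measure (by rw [map_volume_mulVec_sub hM]; exact hg.smul_measure _)
          hT.aemeasurable, ← eLpNorm_const_smul]
        rfl
    _ = eLpNorm g p volume := by
        rw [map_volume_mulVec_sub hM, eLpNorm_smul_measure_of_ne_zero (by simpa using hM),
          smul_eq_mul, ← mul_assoc, hcancel, one_mul]

section

variable {μ : (Fin d → ℝ) → Matrix (Fin d) (Fin d) ℝ} (hμ : ∀ i j, Measurable fun y => μ y i j)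
include hμ

theorem measurable_det_of_entries : Measurable fun y => (μ y).det :=
  (continuous_matrix fun i j => continuous_apply_apply i j).matrix_det.measurable.comp
    (measurable_pi_lambda (fun y i j => μ y i j) fun i => measurable_pi_lambda _ (hμ i))

theorem measurable_mulVec_sub_of_entries :
    Measurable fun q : (Fin d → ℝ) × (Fin d → ℝ) => μ q.2 *ᵥ (q.1 - q.2) :=
  ((continuous_matrix fun i j => (continuous_apply_apply i j).comp continuous_fst).matrix_mulVec
      continuous_snd).measurable.comp
    (((measurable_pi_lambda (fun y i j => μ y i j) fun i =>
      measurable_pi_lambda _ (hμ i)).comp measurable_snd).prodMk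
        (measurable_fst.sub measurable_snd))

theorem quasiMeasurePreserving_mulVec_sub (hdet : ∀ y, (μ y).det ≠ 0) :
    Measure.QuasiMeasurePreserving (fun q : (Fin d → ℝ) × (Fin d → ℝ) => μ q.2 *ᵥ (q.1 - q.2))
      (volume.prod volume) volume := by
  refine ⟨measurable_mulVec_sub_of_entries hμ, Measure.AbsolutelyContinuous.mk fun S hS hS0 => ?_⟩
  have hT := measurable_mulVec_sub_of_entries hμ
  rw [Measure.map_apply hT hS, Measure.prod_apply_symm (hT hS)]
  have hslice : ∀ y, volume ((fun x => μ y *ᵥ (x - y)) ⁻¹' S) = 0 := fun y => by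
    rw [← Measure.map_apply (continuous_const.matrix_mulVec (continuous_sub_right y)).measurable hS,
      map_volume_mulVec_sub (hdet y), Measure.smul_apply, hS0, smul_zero]
  exact (lintegral_congr hslice).trans lintegral_zero

theorem measurable_adaptiveKernel (p : ℝ≥0∞) {g : (Fin d → ℝ) → ℝ} (hg : Measurable g) :
    Measurable (Function.uncurry (adaptiveKernel p μ g)) :=
  (((measurable_det_of_entries hμ).abs.pow_const _).comp measurable_snd).mul
    (hg.comp (measurable_mulVec_sub_of_entries hμ))

theorem stronglyMeasurable_adaptiveConv (p : ℝ≥0∞) {f g : (Fin d → ℝ) → ℝ} (hf : Measurable f)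
    (hg : Measurable g) : StronglyMeasurable (adaptiveConv p μ f g) :=
  ((hf.comp measurable_snd).mul (measurable_adaptiveKernel hμ p hg)).stronglyMeasurable
    |>.integral_prod_right'

theorem adaptiveConv_congr_ae (p : ℝ≥0∞) (hdet : ∀ y, (μ y).det ≠ 0)
    {f f' g g' : (Fin d → ℝ) → ℝ} (hf : f =ᵐ[volume] f') (hg : g =ᵐ[volume] g') :
    adaptiveConv p μ f g =ᵐ[volume] adaptiveConv p μ f' g' := by
  filter_upwards [Measure.ae_ae_of_ae_prod ((quasiMeasurePreserving_mulVec_sub hμ hdet).ae_eq hg)]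
    with x hx
  refine integral_congr_ae ?_
  filter_upwards [hx, hf] with y hgy hfy
  simp only [adaptiveKernel, hfy, show g (μ y *ᵥ (x - y)) = g' (μ y *ᵥ (x - y)) from hgy]

theorem ae_enorm_adaptiveKernel_top_le (hdet : ∀ y, (μ y).det ≠ 0) (g : (Fin d → ℝ) → ℝ) :
    ∀ᵐ q ∂(volume.prod volume), ‖adaptiveKernel ∞ μ g q.1 q.2‖ₑ ≤ eLpNorm g ∞ volume := by
  filter_upwards [(quasiMeasurePreserving_mulVec_sub hμ hdet).ae (ae_le_eLpNormEssSup (f := g))]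
    with q hq
  simpa [adaptiveKernel] using hq

theorem eLpNorm_adaptiveConv_le {p : ℝ≥0∞} (hp : 1 ≤ p) (hdet : ∀ y, (μ y).det ≠ 0)
    {f g : (Fin d → ℝ) → ℝ} (hf : Measurable f) (hg : Measurable g) :
    eLpNorm (adaptiveConv p μ f g) p volume ≤ eLpNorm f 1 volume * eLpNorm g p volume := by
  rcases eq_or_ne p ∞ with rfl | hp_top
  · exact eLpNorm_top_integral_smul_le hf.aestronglyMeasurable
      (ae_enorm_adaptiveKernel_top_le hμ hdet g)
  · exact eLpNorm_integral_smul_le hp hp_top hf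
      (measurable_adaptiveKernel hμ p hg).stronglyMeasurable fun y =>
        (eLpNorm_det_rpow_mul_comp_mulVec_sub p hg.aestronglyMeasurable (hdet y) y).le

end

/-- **Young's inequality for μ-adaptive convolutions.**
For `f ∈ L¹(ℝᵈ)`, `g ∈ Lᵖ(ℝᵈ)` (`1 ≤ p ≤ ∞`) and a measurable field of
invertible matrices `μ : ℝᵈ → GL(d,ℝ)`, the μ-adaptive convolution
`(f ∗ᵖ_μ g)(x) = ∫ f(y) |det μ(y)|^{1/p} g(μ(y)(x−y)) dy`
belongs to `Lᵖ` and `‖f ∗ᵖ_μ g‖_p ≤ ‖f‖₁ ‖g‖_p`.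
(The convention `1/p = 0` for `p = ∞` is realized by `(1/p).toReal`.) -/
theorem adaptive_convolution_young {d : ℕ} (p : ℝ≥0∞) (hp : 1 ≤ p)
    (f g : (Fin d → ℝ) → ℝ) (hf : Integrable f) (hg : MemLp g p)
    (μ : (Fin d → ℝ) → Matrix (Fin d) (Fin d) ℝ)
    (hμmeas : ∀ i j, Measurable fun y => μ y i j) (hμinv : ∀ y, IsUnit (μ y)) :
    MemLp (fun x => ∫ y, f y *
        (|(μ y).det| ^ (1 / p).toReal * g ((μ y).mulVec (x - y)))) p volume ∧
    eLpNorm (fun x => ∫ y, f y *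
        (|(μ y).det| ^ (1 / p).toReal * g ((μ y).mulVec (x - y)))) p volume
      ≤ eLpNorm f 1 volume * eLpNorm g p volume := by
  have hdet : ∀ y, (μ y).det ≠ 0 := fun y => ((μ y).isUnit_iff_isUnit_det.mp (hμinv y)).ne_zero
  obtain ⟨f', hf'm, hff'⟩ := hf.aestronglyMeasurable
  obtain ⟨g', hg'm, hgg'⟩ := hg.aestronglyMeasurable
  have hconv := adaptiveConv_congr_ae hμmeas p hdet hff' hgg'
  have hbound : eLpNorm (adaptiveConv p μ f g) p volume
      ≤ eLpNorm f 1 volume * eLpNorm g p volume := by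
    rw [eLpNorm_congr_ae hconv, eLpNorm_congr_ae hff', eLpNorm_congr_ae hgg']
    exact eLpNorm_adaptiveConv_le hμmeas hp hdet hf'm.measurable hg'm.measurable
  refine ⟨⟨?_, hbound.trans_lt (ENNReal.mul_lt_top
    (memLp_one_iff_integrable.2 hf).eLpNorm_lt_top hg.eLpNorm_lt_top)⟩, hbound⟩
  exact (stronglyMeasurable_adaptiveConv hμmeas p hf'm.measurable hg'm.measurable)
    |>.aestronglyMeasurable.congr hconv.symm
end

section
/- Let f ∈ L¹(ℝᵈ), let g ∈ L¹(ℝᵈ) be radially symmetric, i.e. g(x) = γ(‖x‖²) for some γ : ℝ_{≥0} → ℝ, let A ∈ GL(d,ℝ), and let μ, μ̃ : ℝᵈ → GL(d,ℝ) be measurable functions satisfying μ̃(x)ᵀ μ̃(x) = Aᵀ μ(Ax)ᵀ μ(Ax) A for all x ∈ ℝᵈ. Then for every x ∈ ℝᵈ, ((f(A·)) ∗_{μ̃} g)(x) = (f ∗_μ g)(Ax); that is, the adaptive convolution of the linearly rescaled function is the rescaling of the adaptive convolution. -/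
open MeasureTheory Matrix

/-!
Substitute `y = A z` in the right-hand side: the Jacobian contributes `|det A|`. The relation
between `μ̃` and `μ` says that `μ̃(z)` and `μ(Az) A` have the same Gram matrix, so they have the
same `|det|` and the same Euclidean norm on every vector; as `g` only depends on that norm, the
two integrands agree pointwise.
-/

theorem Matrix.abs_det_eq_of_transpose_mul_self_eq {n R : Type*} [Fintype n] [DecidableEq n]
    [CommRing R] [LinearOrder R] [IsStrictOrderedRing R] {M N : Matrix n n R}
    (h : Mᵀ * M = Nᵀ * N) : |M.det| = |N.det| := by
  have hdet := congrArg det h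
  simp only [det_mul, det_transpose] at hdet
  exact (sq_eq_sq_iff_abs_eq_abs _ _).mp (by rw [sq, sq, hdet])

theorem Matrix.sum_sq_mulVec_eq_dotProduct_mulVec {m n R : Type*} [Fintype m] [Fintype n]
    [CommRing R] (M : Matrix m n R) (v : n → R) :
    ∑ i, (M *ᵥ v) i ^ 2 = v ⬝ᵥ (Mᵀ * M) *ᵥ v := by
  rw [← mulVec_mulVec, dotProduct_mulVec, vecMul_transpose]
  simp only [dotProduct, sq]

theorem Matrix.sum_sq_mulVec_eq_of_transpose_mul_self_eq {m m' n R : Type*} [Fintype m]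
    [Fintype m'] [Fintype n] [CommRing R] {M : Matrix m n R} {N : Matrix m' n R}
    (h : Mᵀ * M = Nᵀ * N) (v : n → R) :
    ∑ i, (M *ᵥ v) i ^ 2 = ∑ i, (N *ᵥ v) i ^ 2 := by
  rw [sum_sq_mulVec_eq_dotProduct_mulVec, sum_sq_mulVec_eq_dotProduct_mulVec, h]

theorem MeasureTheory.integral_comp_mulVec {ι E : Type*} [Fintype ι] [DecidableEq ι]
    [NormedAddCommGroup E] [NormedSpace ℝ E] {A : Matrix ι ι ℝ} (hA : A.det ≠ 0)
    (h : (ι → ℝ) → E) :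
    |A.det| • ∫ z, h (A *ᵥ z) = ∫ y, h y := by
  have hA' : IsUnit A := (isUnit_iff_isUnit_det A).mpr hA.isUnit
  have hchange := integral_image_eq_integral_abs_det_fderiv_smul volume MeasurableSet.univ
    (f := (A *ᵥ ·)) (f' := fun _ => LinearMap.toContinuousLinearMap (toLin' A))
    (fun _ _ => (LinearMap.toContinuousLinearMap (toLin' A)).hasFDerivAt.hasFDerivWithinAt)
    (mulVec_injective_iff_isUnit.mpr hA').injOn h
  simpa [(mulVec_surjective_iff_isUnit.mpr hA').range_eq, integral_smul] using hchange.symm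

theorem adaptive_convolution_scaling_general {d : ℕ}
    (f g : (Fin d → ℝ) → ℝ)
    (γ : ℝ → ℝ) (hrad : ∀ x : Fin d → ℝ, g x = γ (∑ i, (x i) ^ 2))
    (A : Matrix (Fin d) (Fin d) ℝ) (hA : IsUnit A)
    (μ μt : (Fin d → ℝ) → Matrix (Fin d) (Fin d) ℝ)
    (hrel : ∀ x, (μt x)ᵀ * μt x = Aᵀ * (μ (A.mulVec x))ᵀ * μ (A.mulVec x) * A)
    (x : Fin d → ℝ) :
    (∫ y, f (A.mulVec y) * (|(μt y).det| * g ((μt y).mulVec (x - y))))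
      = ∫ y, f y * (|(μ y).det| * g ((μ y).mulVec (A.mulVec x - y))) := by
  have hdet : A.det ≠ 0 := ((isUnit_iff_isUnit_det A).mp hA).ne_zero
  conv_rhs => rw [← integral_comp_mulVec hdet, smul_eq_mul, ← integral_const_mul]
  congr 1 with z
  have hgram : (μt z)ᵀ * μt z = (μ (A *ᵥ z) * A)ᵀ * (μ (A *ᵥ z) * A) := by
    simp only [hrel z, transpose_mul, Matrix.mul_assoc]
  rw [abs_det_eq_of_transpose_mul_self_eq hgram, hrad, hrad,
    sum_sq_mulVec_eq_of_transpose_mul_self_eq hgram, ← mulVec_mulVec, mulVec_sub, det_mul,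
    abs_mul]
  ring

/-- **Scale invariance of μ-adaptive convolutions for radial kernels.**
Let `g(x) = γ(‖x‖²)` be radially symmetric (Euclidean norm) and suppose the
adaptation functions `μ, μ̃` satisfy `μ̃(x)ᵀ μ̃(x) = Aᵀ μ(Ax)ᵀ μ(Ax) A`.
Then `((f(A·)) ∗_{μ̃} g)(x) = (f ∗_μ g)(Ax)`. -/
theorem adaptive_convolution_scaling {d : ℕ}
    (f g : (Fin d → ℝ) → ℝ) (hf : Integrable f) (hg : Integrable g)
    (γ : ℝ → ℝ) (hrad : ∀ x : Fin d → ℝ, g x = γ (∑ i, (x i) ^ 2))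
    (A : Matrix (Fin d) (Fin d) ℝ) (hA : IsUnit A)
    (μ μt : (Fin d → ℝ) → Matrix (Fin d) (Fin d) ℝ)
    (hμmeas : ∀ i j, Measurable fun y => μ y i j)
    (hμtmeas : ∀ i j, Measurable fun y => μt y i j)
    (hμinv : ∀ y, IsUnit (μ y)) (hμtinv : ∀ y, IsUnit (μt y))
    (hrel : ∀ x, (μt x)ᵀ * μt x = Aᵀ * (μ (A.mulVec x))ᵀ * μ (A.mulVec x) * A)
    (x : Fin d → ℝ) :
    (∫ y, f (A.mulVec y) * (|(μt y).det| * g ((μt y).mulVec (x - y))))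
      = ∫ y, f y * (|(μ y).det| * g ((μ y).mulVec (A.mulVec x - y))) :=
  adaptive_convolution_scaling_general f g γ hrad A hA μ μt hrel x
end

section
/- Let f = G[a,Σ] be the Gaussian density with mean a ∈ ℝᵈ and symmetric positive definite covariance Σ ∈ GL(d,ℝ). Then: (1) ∇f(x) ∇f(x)ᵀ − f(x)·D²f(x) = f(x)² · Σ^{−1} for all x ∈ ℝᵈ; (2) consequently the Wigner-based adaptation function is constant, μ_f^{(e)}(x) = ½ Σ^{−1/2} for all x, i.e. (μ_f^{(e)})²(x) = ¼ Σ^{−1}; (3) moreover, for any 0 < λ < √2, the constant function μ(x) ≡ (2−λ²)^{−1/2} Σ^{−1/2} solves the implicit equation μ²(x) = λ²μ²(x)/2 + [((∇f ∇fᵀ − f·D²f) ∗ G_{(λμ)^{−2}(x)}²)(x)] / [2 (f² ∗ G_{(λμ)^{−2}(x)}²)(x)]. -/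
/-!
For `f = G[a,Σ]` one has `∇f = −f Σ⁻¹(x−a)` and `D²f = f Σ⁻¹(x−a)(x−a)ᵀΣ⁻¹ − f Σ⁻¹`, so the
rank-one terms cancel in `∇f∇fᵀ − f D²f`, leaving `f² Σ⁻¹`. For any `f` with
`∇f∇fᵀ − f D²f = f² Q`, both convolution quotients collapse to `Q` times a ratio of two equal
scalar integrals; these are nonzero because the integrands are positive and integrable, `Σ⁻¹`
dominating a positive multiple of the identity. Part (3) is then the identity
`1/(2−λ²) = λ²/(2(2−λ²)) + 1/2`.
-/

open MeasureTheory Matrix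
open scoped ENNReal

/-- The Gaussian density `G[a,Σ](x) = (2π)^{−d/2}|det Σ|^{−1/2} exp(−½ (x−a)ᵀΣ⁻¹(x−a))`. -/
noncomputable def gaussianGM {d : ℕ} (a : Fin d → ℝ) (S : Matrix (Fin d) (Fin d) ℝ)
    (x : Fin d → ℝ) : ℝ :=
  ((2 * Real.pi) ^ (-(d : ℝ) / 2) : ℝ) * |S.det| ^ (-(1 : ℝ) / 2) *
    Real.exp (-(1 / 2) * ((x - a) ⬝ᵥ S⁻¹.mulVec (x - a)))

/-- The matrix-valued function `∇f ∇fᵀ − f·D²f`. -/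
noncomputable def varMat {d : ℕ} (f : (Fin d → ℝ) → ℝ) (z : Fin d → ℝ) :
    Matrix (Fin d) (Fin d) ℝ :=
  Matrix.of fun i j =>
    fderiv ℝ f z (Pi.single i 1) * fderiv ℝ f z (Pi.single j 1)
      - f z * fderiv ℝ (fun w => fderiv ℝ f w (Pi.single j 1)) z (Pi.single i 1)

/-- The square `C_f(x) = ((f²) ∗ (∇f∇fᵀ − f D²f))(2x) / (4 ((f²) ∗ (f²))(2x))`
of the Wigner-based adaptation function `μ_f^{(e)}`. -/
noncomputable def Cmat {d : ℕ} (f : (Fin d → ℝ) → ℝ) (x : Fin d → ℝ) :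
    Matrix (Fin d) (Fin d) ℝ :=
  (4 * ∫ y, (f y) ^ 2 * (f ((2 : ℝ) • x - y)) ^ 2)⁻¹ •
    Matrix.of fun i j => ∫ y, (f y) ^ 2 * varMat f ((2 : ℝ) • x - y) i j

section

variable {ι : Type*} [Fintype ι] [DecidableEq ι]

open scoped MatrixOrder in
lemma Matrix.PosDef.exists_pos_mul_dotProduct_self_le {Q : Matrix ι ι ℝ} (hQ : Q.PosDef) :
    ∃ r > 0, ∀ v : ι → ℝ, r * (v ⬝ᵥ v) ≤ v ⬝ᵥ Q *ᵥ v := by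
  cases isEmpty_or_nonempty ι
  · exact ⟨1, one_pos, fun v => by simp [Subsingleton.elim v 0]⟩
  -- `r • 1 ≤ Q` in the Loewner order, for any `0 < r` below the (positive) spectrum of `Q`
  obtain ⟨r, hr, hle⟩ : ∃ r > 0, algebraMap ℝ (Matrix ι ι ℝ) r ≤ Q :=
    (CFC.exists_pos_algebraMap_le_iff hQ.isStrictlyPositive.isSelfAdjoint).2
      fun x hx ↦ hQ.isStrictlyPositive.spectrum_pos hx
  refine ⟨r, hr, fun v => ?_⟩
  simpa [sub_mulVec, Algebra.algebraMap_eq_smul_one, smul_mulVec, dotProduct_sub,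
    dotProduct_smul] using (Matrix.le_iff.mp hle).dotProduct_mulVec_nonneg v

lemma hasFDerivAt_sub_dotProduct_mulVec_sub {Q : Matrix ι ι ℝ} (hQ : Q.IsSymm) (a x : ι → ℝ) :
    HasFDerivAt (fun y => (y - a) ⬝ᵥ Q *ᵥ (y - a))
      ((2 : ℝ) • (Matrix.toLinearMap₂' ℝ Q).toContinuousBilinearMap (x - a)) x := by
  have hsub : HasFDerivAt (fun y : ι → ℝ => y - a) (ContinuousLinearMap.id ℝ _) x :=
    (hasFDerivAt_id x).sub_const a
  set B : (ι → ℝ) →L[ℝ] (ι → ℝ) →L[ℝ] ℝ := (Matrix.toLinearMap₂' ℝ Q).toContinuousBilinearMap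
  have hB : ∀ u v, B u v = u ⬝ᵥ Q *ᵥ v := fun u v => Matrix.toLinearMap₂'_apply' Q u v
  have h := B.hasFDerivAt_of_bilinear hsub hsub
  simp only [hB] at h
  refine h.congr_fderiv ?_
  ext v
  have hcomm : ∀ u w, u ⬝ᵥ Q *ᵥ w = w ⬝ᵥ Q *ᵥ u := fun u w => by
    rw [← dotProduct_transpose_mulVec, hQ.eq]
  simp [hB, two_smul, hcomm v]

end

variable {d : ℕ}

lemma continuous_gaussianGM (a : Fin d → ℝ) (S : Matrix (Fin d) (Fin d) ℝ) :
    Continuous (gaussianGM a S) := by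
  unfold gaussianGM; fun_prop

lemma hasFDerivAt_gaussianGM {S : Matrix (Fin d) (Fin d) ℝ} (hS : S.IsSymm) (a x : Fin d → ℝ) :
    HasFDerivAt (gaussianGM a S)
      (-gaussianGM a S x • (Matrix.toLinearMap₂' ℝ S⁻¹).toContinuousBilinearMap (x - a)) x := by
  have h := (((hasFDerivAt_sub_dotProduct_mulVec_sub hS.inv a x).const_mul
    (-(1 / 2) : ℝ)).exp).const_mul
      (((2 * Real.pi) ^ (-(d : ℝ) / 2) : ℝ) * |S.det| ^ (-(1 : ℝ) / 2))
  refine h.congr_fderiv ?_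
  ext v
  simp [gaussianGM]
  ring

lemma fderiv_gaussianGM_apply {S : Matrix (Fin d) (Fin d) ℝ} (hS : S.IsSymm) (a x v : Fin d → ℝ) :
    fderiv ℝ (gaussianGM a S) x v = -gaussianGM a S x * ((x - a) ⬝ᵥ S⁻¹ *ᵥ v) := by
  rw [(hasFDerivAt_gaussianGM hS a x).fderiv]
  simp [Matrix.toLinearMap₂'_apply']

lemma fderiv_fderiv_gaussianGM_apply {S : Matrix (Fin d) (Fin d) ℝ} (hS : S.IsSymm)
    (a x u v : Fin d → ℝ) :
    fderiv ℝ (fun w => fderiv ℝ (gaussianGM a S) w v) x u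
      = gaussianGM a S x * ((x - a) ⬝ᵥ S⁻¹ *ᵥ u * ((x - a) ⬝ᵥ S⁻¹ *ᵥ v) - u ⬝ᵥ S⁻¹ *ᵥ v) := by
  have hlin : HasFDerivAt (fun w => (w - a) ⬝ᵥ S⁻¹ *ᵥ v)
      ((Matrix.toLinearMap₂' ℝ S⁻¹).toContinuousBilinearMap.flip v) x := by
    have h := (((Matrix.toLinearMap₂' ℝ S⁻¹).toContinuousBilinearMap.flip v).hasFDerivAt).comp x
      ((hasFDerivAt_id x).sub_const a)
    simpa [Function.comp_def, Matrix.toLinearMap₂'_apply'] using h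
  simp_rw [fderiv_gaussianGM_apply hS a]
  rw [(((hasFDerivAt_gaussianGM hS a x).fun_neg).fun_mul hlin).fderiv]
  simp [Matrix.toLinearMap₂'_apply']
  ring

lemma varMat_gaussianGM {S : Matrix (Fin d) (Fin d) ℝ} (hS : S.IsSymm) (a x : Fin d → ℝ) :
    varMat (gaussianGM a S) x = gaussianGM a S x ^ 2 • S⁻¹ := by
  ext i j
  rw [varMat, of_apply, fderiv_fderiv_gaussianGM_apply hS a, fderiv_gaussianGM_apply hS a,
    fderiv_gaussianGM_apply hS a]
  simp [Matrix.smul_apply]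
  ring

lemma gaussianGM_nonneg (a : Fin d → ℝ) (S : Matrix (Fin d) (Fin d) ℝ) (x : Fin d → ℝ) :
    0 ≤ gaussianGM a S x := by
  unfold gaussianGM; positivity

lemma gaussianGM_pos (a : Fin d → ℝ) {S : Matrix (Fin d) (Fin d) ℝ} (hS : S.det ≠ 0)
    (x : Fin d → ℝ) : 0 < gaussianGM a S x := by
  unfold gaussianGM
  have := abs_pos.mpr hS
  positivity

lemma gaussianGM_le_gaussianGM_self (a : Fin d → ℝ) {S : Matrix (Fin d) (Fin d) ℝ}
    (hS : S.PosSemidef) (x : Fin d → ℝ) :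
    gaussianGM a S x ≤ gaussianGM a S a := by
  have hq := hS.inv.dotProduct_mulVec_nonneg (x - a)
  simp only [star_trivial] at hq
  unfold gaussianGM
  simp only [sub_self, zero_dotProduct, mul_zero, Real.exp_zero, mul_one]
  exact mul_le_of_le_one_right (by positivity) (Real.exp_le_one_iff.mpr (by linarith))

lemma integrable_gaussianGM (a : Fin d → ℝ) {S : Matrix (Fin d) (Fin d) ℝ} (hS : S.PosDef) :
    Integrable (gaussianGM a S) := by
  obtain ⟨r, hr, hle⟩ := hS.inv.exists_pos_mul_dotProduct_self_le
  have hdom : Integrable fun y : Fin d → ℝ =>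
      gaussianGM a S a * ∏ i, Real.exp (-(r / 2) * (y i - a i) ^ 2) :=
    (Integrable.fintype_prod fun i =>
      (integrable_exp_neg_mul_sq (by positivity)).comp_sub_right (a i)).const_mul _
  refine hdom.mono' (continuous_gaussianGM a S).aestronglyMeasurable (.of_forall fun y => ?_)
  have hy := hle (y - a)
  rw [Real.norm_of_nonneg (gaussianGM_nonneg a S y), ← Real.exp_sum]
  unfold gaussianGM
  simp only [sub_self, zero_dotProduct, mul_zero, Real.exp_zero, mul_one]
  gcongr
  simp only [dotProduct, Pi.sub_apply] at hy ⊢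
  simp only [sq, ← Finset.mul_sum]
  linarith

lemma integrable_gaussianGM_sq_mul_sq (a : Fin d → ℝ) {S T : Matrix (Fin d) (Fin d) ℝ}
    (hS : S.PosDef) (hT : T.PosSemidef) (b c : Fin d → ℝ) :
    Integrable fun y => gaussianGM a S y ^ 2 * gaussianGM b T (c - y) ^ 2 := by
  have hcont : Continuous fun y => gaussianGM a S y * gaussianGM b T (c - y) ^ 2 := by
    have := continuous_gaussianGM b T
    have := continuous_gaussianGM a S
    fun_prop
  have hbdd : ∀ y, ‖gaussianGM a S y * gaussianGM b T (c - y) ^ 2‖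
      ≤ gaussianGM a S a * gaussianGM b T b ^ 2 := fun y => by
    have hf := gaussianGM_nonneg a S y
    have hg := gaussianGM_nonneg b T (c - y)
    rw [Real.norm_of_nonneg (by positivity)]
    exact mul_le_mul (gaussianGM_le_gaussianGM_self a hS.posSemidef y)
      (pow_le_pow_left₀ hg (gaussianGM_le_gaussianGM_self b hT (c - y)) 2) (by positivity)
      (gaussianGM_nonneg a S a)
  refine ((integrable_gaussianGM a hS).mul_bdd hcont.aestronglyMeasurable
    (.of_forall hbdd)).congr (.of_forall fun y => ?_)
  ring

lemma integral_gaussianGM_sq_mul_sq_pos (a : Fin d → ℝ) {S T : Matrix (Fin d) (Fin d) ℝ}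
    (hS : S.PosDef) (hT : T.PosDef) (b c : Fin d → ℝ) :
    0 < ∫ y, gaussianGM a S y ^ 2 * gaussianGM b T (c - y) ^ 2 := by
  rw [integral_pos_iff_support_of_nonneg (fun y => by positivity)
    (integrable_gaussianGM_sq_mul_sq a hS hT.posSemidef b c)]
  have hsupp : Function.support (fun y => gaussianGM a S y ^ 2 * gaussianGM b T (c - y) ^ 2)
      = Set.univ := Set.eq_univ_of_forall fun y => by
    have := gaussianGM_pos a hS.det_pos.ne' y
    have := gaussianGM_pos b hT.det_pos.ne' (c - y)
    simp only [Function.mem_support]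
    positivity
  rw [hsupp, Measure.measure_univ_pos]
  exact NeZero.ne _

lemma Cmat_eq_of_varMat_eq_sq_smul {f : (Fin d → ℝ) → ℝ} {Q : Matrix (Fin d) (Fin d) ℝ}
    (hf : ∀ z, varMat f z = f z ^ 2 • Q) (x : Fin d → ℝ)
    (hI : ∫ y, f y ^ 2 * f ((2 : ℝ) • x - y) ^ 2 ≠ 0) :
    Cmat f x = (4 : ℝ)⁻¹ • Q := by
  have hentries : (Matrix.of fun i j => ∫ y, f y ^ 2 * varMat f ((2 : ℝ) • x - y) i j)
      = (∫ y, f y ^ 2 * f ((2 : ℝ) • x - y) ^ 2) • Q := by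
    ext i j
    simp only [hf, of_apply, Matrix.smul_apply, smul_eq_mul, ← mul_assoc, integral_mul_const]
  rw [Cmat, hentries, smul_smul, mul_inv, mul_assoc, inv_mul_cancel₀ hI, mul_one]

lemma smul_integral_varMat_mul_sq_eq_of_varMat_eq_sq_smul {f : (Fin d → ℝ) → ℝ}
    {Q : Matrix (Fin d) (Fin d) ℝ} (hf : ∀ z, varMat f z = f z ^ 2 • Q) (g : (Fin d → ℝ) → ℝ)
    (x : Fin d → ℝ) (hJ : ∫ y, f y ^ 2 * g (x - y) ^ 2 ≠ 0) :
    (2 * ∫ y, f y ^ 2 * g (x - y) ^ 2)⁻¹ •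
        (Matrix.of fun i j => ∫ y, varMat f y i j * g (x - y) ^ 2)
      = (2 : ℝ)⁻¹ • Q := by
  have hentries : (Matrix.of fun i j => ∫ y, varMat f y i j * g (x - y) ^ 2)
      = (∫ y, f y ^ 2 * g (x - y) ^ 2) • Q := by
    ext i j
    simp only [hf, of_apply, Matrix.smul_apply, smul_eq_mul, mul_right_comm _ (Q i j),
      integral_mul_const]
  rw [hentries, smul_smul, mul_inv, mul_assoc, inv_mul_cancel₀ hJ, mul_one]

theorem gaussian_adaptation_calibration_general {d : ℕ} (a : Fin d → ℝ)
    (S : Matrix (Fin d) (Fin d) ℝ) (hS : S.PosDef) :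
    (∀ x : Fin d → ℝ, varMat (gaussianGM a S) x = (gaussianGM a S x) ^ 2 • S⁻¹) ∧
    (∀ x : Fin d → ℝ, Cmat (gaussianGM a S) x = (4 : ℝ)⁻¹ • S⁻¹) ∧
    (∀ lam : ℝ, 0 < lam → lam < Real.sqrt 2 →
      ∀ x : Fin d → ℝ,
        ((2 - lam ^ 2)⁻¹ • S⁻¹ : Matrix (Fin d) (Fin d) ℝ)
          = (lam ^ 2 / 2) • ((2 - lam ^ 2)⁻¹ • S⁻¹)
            + (2 * ∫ y, (gaussianGM a S y) ^ 2 *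
                  (gaussianGM 0 ((lam⁻¹ ^ 2 * (2 - lam ^ 2)) • S) (x - y)) ^ 2)⁻¹ •
              Matrix.of fun i j =>
                ∫ y, varMat (gaussianGM a S) y i j *
                  (gaussianGM 0 ((lam⁻¹ ^ 2 * (2 - lam ^ 2)) • S) (x - y)) ^ 2) := by
  have hvar := varMat_gaussianGM (isHermitian_iff_isSymm.mp hS.isHermitian) a
  refine ⟨hvar, fun x => ?_, fun lam hlam hlam_lt x => ?_⟩
  · exact Cmat_eq_of_varMat_eq_sq_smul hvar x
      (integral_gaussianGM_sq_mul_sq_pos a hS hS a _).ne'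
  · have hgap : 0 < 2 - lam ^ 2 := sub_pos.mpr ((Real.lt_sqrt hlam.le).mp hlam_lt)
    have hT : ((lam⁻¹ ^ 2 * (2 - lam ^ 2)) • S).PosDef := hS.smul (by positivity)
    rw [smul_integral_varMat_mul_sq_eq_of_varMat_eq_sq_smul hvar _ x
      (integral_gaussianGM_sq_mul_sq_pos a hS hT 0 x).ne', smul_smul, ← add_smul]
    congr 1
    field_simp
    ring

/-- **Calibration on Gaussian densities.** Let `f = G[a,Σ]` with `Σ` symmetric
positive definite. Then (1) `∇f∇fᵀ − f D²f = f² Σ⁻¹`; (2) the square of the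
Wigner-based adaptation function is constant, `(μ_f^{(e)})²(x) = ¼ Σ⁻¹`
(i.e. `μ_f^{(e)} ≡ ½ Σ^{−1/2}`); and (3) for `0 < λ < √2`, the constant matrix
`M = (2−λ²)⁻¹ Σ⁻¹` (the square of `μ ≡ (2−λ²)^{−1/2} Σ^{−1/2}`) solves the
implicit fixed-point equation
`μ² = λ²μ²/2 + ((∇f∇fᵀ − f D²f) ∗ G²_{(λμ)^{-2}})(x) / (2 (f² ∗ G²_{(λμ)^{-2}})(x))`,
where `(λμ)^{−2} = λ⁻²(2−λ²) Σ` is the covariance of the Gaussian window. -/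
theorem gaussian_adaptation_calibration {d : ℕ} (a : Fin d → ℝ)
    (S : Matrix (Fin d) (Fin d) ℝ) (hS : S.PosDef) (hSsymm : Sᵀ = S) :
    (∀ x : Fin d → ℝ, varMat (gaussianGM a S) x = (gaussianGM a S x) ^ 2 • S⁻¹) ∧
    (∀ x : Fin d → ℝ, Cmat (gaussianGM a S) x = (4 : ℝ)⁻¹ • S⁻¹) ∧
    (∀ lam : ℝ, 0 < lam → lam < Real.sqrt 2 →
      ∀ x : Fin d → ℝ,
        ((2 - lam ^ 2)⁻¹ • S⁻¹ : Matrix (Fin d) (Fin d) ℝ)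
          = (lam ^ 2 / 2) • ((2 - lam ^ 2)⁻¹ • S⁻¹)
            + (2 * ∫ y, (gaussianGM a S y) ^ 2 *
                  (gaussianGM 0 ((lam⁻¹ ^ 2 * (2 - lam ^ 2)) • S) (x - y)) ^ 2)⁻¹ •
              Matrix.of fun i j =>
                ∫ y, varMat (gaussianGM a S) y i j *
                  (gaussianGM 0 ((lam⁻¹ ^ 2 * (2 - lam ^ 2)) • S) (x - y)) ^ 2) :=
  gaussian_adaptation_calibration_general a S hS
end
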